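/- arXiv:1312.3289 — 3 statements merged into one kernel-verified Lean document; each statement's English description precedes it below -/
import Mathlib

section
/- For every real number r > 0 and every probability vector (p_i)_{i=1}^N with p_i > 0, N ≥ 2, and constant c ∈ (0,1), there exists a unique s > 0 such that ∑_{i=1}^N (p_i c^r)^{s/(s+r)} = 1. -/
/-!
With `a i = p i * c ^ r`, the function `t ↦ ∑ i, a i ^ t` is continuous and strictly decreasing
(every `a i` lies in `(0, 1)`), equal to `N > 1` at `t = 0` and to `c ^ r < 1` at `t = 1`; so it
takes the value `1` at exactly one `t ∈ (0, 1)`. Since `s ↦ s / (s + r)` maps `(0, ∞)` bijectively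
onto `(0, 1)`, with inverse `t ↦ r t / (1 - t)`, this gives exactly one `s > 0`.
-/

open Set Finset

section SumRpow

variable {ι : Type*} [Fintype ι] {a : ι → ℝ}

theorem strictAnti_sum_rpow [Nonempty ι] (ha0 : ∀ i, 0 < a i) (ha1 : ∀ i, a i < 1) :
    StrictAnti fun t : ℝ => ∑ i, a i ^ t := fun _ _ hts =>
  Finset.sum_lt_sum_of_nonempty univ_nonempty fun i _ =>
    Real.rpow_lt_rpow_of_exponent_gt (ha0 i) (ha1 i) hts

theorem existsUnique_mem_Ioo_sum_rpow_eq_one (ha0 : ∀ i, 0 < a i) (hsum : ∑ i, a i < 1)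
    (hcard : 1 < Fintype.card ι) : ∃! t, t ∈ Ioo (0 : ℝ) 1 ∧ ∑ i, a i ^ t = 1 := by
  have : Nonempty ι := Fintype.card_pos_iff.mp (by omega)
  have ha1 (i : ι) : a i < 1 :=
    (single_le_sum (fun j _ => (ha0 j).le) (mem_univ i)).trans_lt hsum
  set g : ℝ → ℝ := fun t => ∑ i, a i ^ t
  have hanti : StrictAnti g := strictAnti_sum_rpow ha0 ha1
  have hg0 : g 0 = Fintype.card ι := by simp [g]
  have hg1 : g 1 = ∑ i, a i := by simp [g]
  have hcont : Continuous g :=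
    continuous_finsetSum _ fun i _ => Real.continuous_const_rpow (ha0 i).ne'
  have hcard' : (1 : ℝ) < Fintype.card ι := by exact_mod_cast hcard
  obtain ⟨t, ht, hgt⟩ : (1 : ℝ) ∈ g '' Icc 0 1 :=
    intermediate_value_Icc' zero_le_one hcont.continuousOn
      ⟨by rw [hg1]; exact hsum.le, by rw [hg0]; exact hcard'.le⟩
  have ht0 : t ≠ 0 := by rintro rfl; linarith
  have ht1 : t ≠ 1 := by rintro rfl; linarith
  exact ⟨t, ⟨⟨ht.1.lt_of_ne' ht0, ht.2.lt_of_ne ht1⟩, hgt⟩,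
    fun u hu => hanti.injective (hu.2.trans hgt.symm)⟩

end SumRpow

theorem existsUnique_pos_of_existsUnique_mem_Ioo {r : ℝ} (hr : 0 < r) {P : ℝ → Prop}
    (h : ∃! t, t ∈ Ioo (0 : ℝ) 1 ∧ P t) : ∃! s, 0 < s ∧ P (s / (s + r)) := by
  obtain ⟨t, ⟨⟨ht0, ht1⟩, hPt⟩, huniq⟩ := h
  have h1t : 0 < 1 - t := sub_pos.mpr ht1
  have hinv : r * t / (1 - t) / (r * t / (1 - t) + r) = t := by
    field_simp
    ring
  refine ⟨r * t / (1 - t), ⟨by positivity, by rwa [hinv]⟩, fun s ⟨hs, hPs⟩ => ?_⟩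
  have hst : s / (s + r) = t :=
    huniq _ ⟨⟨by positivity, (div_lt_one (by positivity)).mpr (by linarith)⟩, hPs⟩
  rw [eq_div_iff h1t.ne', ← hst]
  field_simp
  ring

/-- For every `r > 0`, probability vector `(p i)` with positive entries, `N ≥ 2`,
and `c ∈ (0,1)`, there is a unique `s > 0` with `∑ i, (p i * c ^ r) ^ (s / (s + r)) = 1`. -/
theorem stmt0 (r : ℝ) (hr : 0 < r) (N : ℕ) (hN : 2 ≤ N) (p : Fin N → ℝ)
    (hp : ∀ i, 0 < p i) (hsum : ∑ i, p i = 1) (c : ℝ) (hc : 0 < c) (hc1 : c < 1) :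
    ∃! s : ℝ, 0 < s ∧ ∑ i, (p i * c ^ r) ^ (s / (s + r)) = 1 := by
  have hcr : 0 < c ^ r := Real.rpow_pos_of_pos hc r
  apply existsUnique_pos_of_existsUnique_mem_Ioo hr (P := fun t => ∑ i, (p i * c ^ r) ^ t = 1)
  have hsum_lt : ∑ i, p i * c ^ r < 1 := by
    rw [← Finset.sum_mul, hsum, one_mul]
    exact Real.rpow_lt_one hc.le hc1 hr
  exact existsUnique_mem_Ioo_sum_rpow_eq_one (fun i => mul_pos (hp i) hcr) hsum_lt
    (by simp only [Fintype.card_fin]; omega)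
end

section
/- With notation as in the main theorem, let t_r > 0 solve m^{−r t_r/(t_r+r)} ∑_{j∈G_y} q_j^{(1−θ) t_r/(t_r+r)} (∑_{i∈G_{x,j}} p_{ij}^{t_r/(t_r+r)})^θ = 1 and s_r > 0 solve m^{−r s_r/(s_r+r)} (∑_{(i,j)∈G} p_{ij}^{s_r/(s_r+r)})^θ (∑_{j∈G_y} q_j^{s_r/(s_r+r)})^{1−θ} = 1. Then t_r ≤ s_r, with equality if and only if the quantities C_{j,r} := q_j^{−s_r/(s_r+r)} ∑_{i∈G_{x,j}} p_{ij}^{s_r/(s_r+r)} are equal for all j ∈ G_y. -/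
/-!
Put `κ = t / (t + r)`, which is strictly increasing in `t`, and
`F(κ) = m^{-rκ} ∑_j q_j^{(1-θ)κ} (∑_i p_{ij}^κ)^θ`, so that `F(κ_t) = 1`. Since `m > 1` and all
`p_{ij}, q_j ≤ 1`, `F` is strictly decreasing. Hölder's inequality with exponents `1/(1-θ)` and
`1/θ`, applied to `a_j = q_j^κ` and `b_j = ∑_i p_{ij}^κ`, gives `F(κ_s) ≤ 1`, with equality iff
the ratios `b_j / a_j = C_{j,r}` agree. Hence `κ_t ≤ κ_s`, with equality iff `F(κ_s) = 1`.
-/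

open Real Finset

namespace Real

variable {ι : Type*} {s : Finset ι} {a b : ι → ℝ} {θ : ℝ}

lemma sum_rpow_one_sub_mul_rpow_eq (ha : ∀ i ∈ s, 0 < a i) (hb : ∀ i ∈ s, 0 < b i) :
    ∑ i ∈ s, a i ^ (1 - θ) * b i ^ θ = (∑ i ∈ s, a i) ^ (1 - θ) * (∑ i ∈ s, b i) ^ θ *
      ∑ i ∈ s, (a i / ∑ j ∈ s, a j) ^ (1 - θ) * (b i / ∑ j ∈ s, b j) ^ θ := by
  rw [mul_sum]
  refine sum_congr rfl fun i hi => ?_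
  have hA : 0 < ∑ j ∈ s, a j := sum_pos ha ⟨i, hi⟩
  have hB : 0 < ∑ j ∈ s, b j := sum_pos hb ⟨i, hi⟩
  rw [div_rpow (ha i hi).le hA.le, div_rpow (hb i hi).le hB.le]
  field_simp

lemma sum_weighted_div_sum_eq_one (hs : s.Nonempty) (ha : ∀ i ∈ s, 0 < a i)
    (hb : ∀ i ∈ s, 0 < b i) :
    ∑ i ∈ s, ((1 - θ) * (a i / ∑ j ∈ s, a j) + θ * (b i / ∑ j ∈ s, b j)) = 1 := by
  have hA := (sum_pos ha hs).ne'
  have hB := (sum_pos hb hs).ne'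
  simp only [sum_add_distrib, ← mul_sum, ← sum_div, div_self hA, div_self hB]
  ring

lemma sum_rpow_one_sub_mul_rpow_le (hθ₀ : 0 ≤ θ) (hθ₁ : θ ≤ 1) (ha : ∀ i ∈ s, 0 < a i)
    (hb : ∀ i ∈ s, 0 < b i) :
    ∑ i ∈ s, a i ^ (1 - θ) * b i ^ θ ≤ (∑ i ∈ s, a i) ^ (1 - θ) * (∑ i ∈ s, b i) ^ θ := by
  rcases s.eq_empty_or_nonempty with rfl | hs
  · simp only [sum_empty]
    exact mul_nonneg (rpow_nonneg le_rfl _) (rpow_nonneg le_rfl _)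
  have hA := sum_pos ha hs
  have hB := sum_pos hb hs
  rw [sum_rpow_one_sub_mul_rpow_eq ha hb]
  refine mul_le_of_le_one_right (by positivity) ?_
  refine (sum_le_sum fun i hi => ?_).trans (sum_weighted_div_sum_eq_one (θ := θ) hs ha hb).le
  exact geom_mean_le_arith_mean2_weighted (by linarith) hθ₀ (div_nonneg (ha i hi).le hA.le)
    (div_nonneg (hb i hi).le hB.le) (by ring)

lemma forall_div_sum_eq_div_sum_iff (ha : ∀ i ∈ s, 0 < a i) (hb : ∀ i ∈ s, 0 < b i) :
    (∀ i ∈ s, a i / ∑ j ∈ s, a j = b i / ∑ j ∈ s, b j) ↔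
      ∀ i ∈ s, ∀ j ∈ s, b i / a i = b j / a j := by
  have key : ∀ i ∈ s, (a i / ∑ j ∈ s, a j = b i / ∑ j ∈ s, b j ↔
      b i / a i = (∑ j ∈ s, b j) / ∑ j ∈ s, a j) := fun i hi => by
    rw [div_eq_div_iff (sum_pos ha ⟨i, hi⟩).ne' (sum_pos hb ⟨i, hi⟩).ne',
      div_eq_div_iff (ha i hi).ne' (sum_pos ha ⟨i, hi⟩).ne']
    constructor <;> intro h <;> linarith
  refine ⟨fun h i hi j hj => ?_, fun h i hi => (key i hi).2 ?_⟩
  · rw [(key i hi).1 (h i hi), (key j hj).1 (h j hj)]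
  · have hA := (sum_pos ha ⟨i, hi⟩).ne'
    rw [eq_div_iff hA, mul_sum]
    refine sum_congr rfl fun j hj => ?_
    rw [h i hi j hj, div_mul_cancel₀ _ (ha j hj).ne']

lemma sum_rpow_one_sub_mul_rpow_eq_iff (hθ₀ : 0 < θ) (hθ₁ : θ < 1) (ha : ∀ i ∈ s, 0 < a i)
    (hb : ∀ i ∈ s, 0 < b i) :
    ∑ i ∈ s, a i ^ (1 - θ) * b i ^ θ = (∑ i ∈ s, a i) ^ (1 - θ) * (∑ i ∈ s, b i) ^ θ ↔
      ∀ i ∈ s, ∀ j ∈ s, b i / a i = b j / a j := by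
  rcases s.eq_empty_or_nonempty with rfl | hs
  · simp [zero_rpow (sub_ne_zero.2 hθ₁.ne'), zero_rpow hθ₀.ne']
  have hA := sum_pos ha hs
  have hB := sum_pos hb hs
  rw [← forall_div_sum_eq_div_sum_iff ha hb, sum_rpow_one_sub_mul_rpow_eq ha hb,
    mul_eq_left₀ (by positivity), Eq.congr_right (sum_weighted_div_sum_eq_one hs ha hb).symm,
    sum_eq_sum_iff_of_le fun i hi => geom_mean_le_arith_mean2_weighted (by linarith) hθ₀.le
    (div_nonneg (ha i hi).le hA.le) (div_nonneg (hb i hi).le hB.le) (by ring)]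
  exact forall₂_congr fun i hi => geom_mean_eq_arith_mean2_weighted_iff_of_pos (by linarith) hθ₀
    (div_nonneg (ha i hi).le hA.le) (div_nonneg (hb i hi).le hB.le) (by ring)


lemma log_div_log_mem_Ioo {m n : ℝ} (hm : 1 < m) (hmn : m < n) :
    log m / log n ∈ Set.Ioo 0 1 :=
  ⟨div_pos (log_pos hm) (log_pos (hm.trans hmn)),
    (div_lt_one (log_pos (hm.trans hmn))).2 (log_lt_log (by linarith) hmn)⟩

end Real

lemma div_add_le_div_add_iff {r t s : ℝ} (hr : 0 < r) (ht : 0 < t + r) (hs : 0 < s + r) :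
    t / (t + r) ≤ s / (s + r) ↔ t ≤ s := by
  rw [div_le_div_iff₀ ht hs]
  constructor <;> intro h <;> nlinarith

lemma antitone_sum_rpow {ι : Type*} {s : Finset ι} {p : ι → ℝ} (hp : ∀ x ∈ s, 0 < p x)
    (hp₁ : ∀ x ∈ s, p x ≤ 1) : Antitone fun κ : ℝ => ∑ x ∈ s, p x ^ κ :=
  fun _ _ h => sum_le_sum fun x hx => antitone_rpow_of_base_le_one (hp x hx) (hp₁ x hx) h

lemma nonempty_filter_snd_eq {α β : Type*} [DecidableEq β] {G : Finset (α × β)} {j : β}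
    (hj : j ∈ G.image Prod.snd) : (G.filter fun x => x.2 = j).Nonempty := by
  obtain ⟨x, hx, rfl⟩ := mem_image.1 hj
  exact ⟨x, mem_filter.2 ⟨hx, rfl⟩⟩

noncomputable def carpetPressure (G : Finset (ℕ × ℕ)) (p : ℕ × ℕ → ℝ) (q : ℕ → ℝ)
    (m r θ κ : ℝ) : ℝ :=
  m ^ (-(r * κ)) * ∑ j ∈ G.image Prod.snd, q j ^ ((1 - θ) * κ) *
    (∑ x ∈ G.filter (fun x => x.2 = j), p x ^ κ) ^ θ

section carpetPressure

variable {G : Finset (ℕ × ℕ)} {p : ℕ × ℕ → ℝ} {q : ℕ → ℝ} {m r θ : ℝ}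

lemma carpetPressure_strictAnti (hm : 1 < m) (hr : 0 < r) (hθ₀ : 0 ≤ θ) (hθ₁ : θ ≤ 1)
    (hp : ∀ x ∈ G, 0 < p x) (hp₁ : ∀ x ∈ G, p x ≤ 1) (hq : ∀ j ∈ G.image Prod.snd, 0 < q j)
    (hq₁ : ∀ j ∈ G.image Prod.snd, q j ≤ 1) (hG : G.Nonempty) : StrictAnti (carpetPressure G p q m r θ) := by
  have hfiber : ∀ j ∈ G.image Prod.snd, ∀ κ : ℝ,
      0 < ∑ x ∈ G.filter (fun x => x.2 = j), p x ^ κ := fun j hj κ =>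
    sum_pos (fun x hx => rpow_pos_of_pos (hp x (mem_filter.1 hx).1) κ) (nonempty_filter_snd_eq hj)
  have hsum_pos : ∀ κ : ℝ, 0 < ∑ j ∈ G.image Prod.snd, q j ^ ((1 - θ) * κ) *
      (∑ x ∈ G.filter (fun x => x.2 = j), p x ^ κ) ^ θ := fun κ =>
    sum_pos (fun j hj => mul_pos (rpow_pos_of_pos (hq j hj) _) (rpow_pos_of_pos (hfiber j hj κ) _))
      (hG.image _)
  have hsum_anti : Antitone fun κ : ℝ => ∑ j ∈ G.image Prod.snd, q j ^ ((1 - θ) * κ) *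
      (∑ x ∈ G.filter (fun x => x.2 = j), p x ^ κ) ^ θ := fun κ₁ κ₂ h =>
    sum_le_sum fun j hj => mul_le_mul
      (antitone_rpow_of_base_le_one (hq j hj) (hq₁ j hj)
        (mul_le_mul_of_nonneg_left h (by linarith)))
      (rpow_le_rpow (hfiber j hj κ₂).le
        (antitone_sum_rpow (fun x hx => hp x (mem_filter.1 hx).1)
          (fun x hx => hp₁ x (mem_filter.1 hx).1) h) hθ₀)
      (rpow_pos_of_pos (hfiber j hj κ₂) _).le
      (rpow_pos_of_pos (hq j hj) _).le
  intro κ₁ κ₂ h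
  exact mul_lt_mul ((rpow_lt_rpow_left_iff hm).2 (by nlinarith)) (hsum_anti h.le) (hsum_pos κ₂)
    (by positivity)

lemma carpetPressure_eq (hq : ∀ j ∈ G.image Prod.snd, 0 < q j) (κ : ℝ) :
    carpetPressure G p q m r θ κ = m ^ (-(r * κ)) * ∑ j ∈ G.image Prod.snd,
      (q j ^ κ) ^ (1 - θ) * (∑ x ∈ G.filter (fun x => x.2 = j), p x ^ κ) ^ θ := by
  unfold carpetPressure
  congr 1
  refine sum_congr rfl fun j hj => ?_
  rw [← rpow_mul (hq j hj).le, mul_comm κ]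

lemma sum_rpow_eq_sum_fiber (κ : ℝ) :
    ∑ x ∈ G, p x ^ κ = ∑ j ∈ G.image Prod.snd, ∑ x ∈ G.filter (fun x => x.2 = j), p x ^ κ :=
  (sum_fiberwise_of_maps_to (fun _ hx => mem_image_of_mem _ hx) _).symm

lemma carpetPressure_le (hm : 0 ≤ m) (hθ₀ : 0 ≤ θ) (hθ₁ : θ ≤ 1) (hp : ∀ x ∈ G, 0 < p x)
    (hq : ∀ j ∈ G.image Prod.snd, 0 < q j) (κ : ℝ) :
    carpetPressure G p q m r θ κ ≤ m ^ (-(r * κ)) * (∑ x ∈ G, p x ^ κ) ^ θ *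
      (∑ j ∈ G.image Prod.snd, q j ^ κ) ^ (1 - θ) := by
  rw [carpetPressure_eq hq, sum_rpow_eq_sum_fiber, mul_assoc, mul_comm (_ ^ θ)]
  refine mul_le_mul_of_nonneg_left (sum_rpow_one_sub_mul_rpow_le hθ₀ hθ₁
    (fun j hj => rpow_pos_of_pos (hq j hj) κ) fun j hj => ?_) (rpow_nonneg hm _)
  exact sum_pos (fun x hx => rpow_pos_of_pos (hp x (mem_filter.1 hx).1) κ)
    (nonempty_filter_snd_eq hj)

lemma carpetPressure_eq_iff (hm : 0 < m) (hθ₀ : 0 < θ) (hθ₁ : θ < 1) (hp : ∀ x ∈ G, 0 < p x)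
    (hq : ∀ j ∈ G.image Prod.snd, 0 < q j) (κ : ℝ) :
    carpetPressure G p q m r θ κ = m ^ (-(r * κ)) * (∑ x ∈ G, p x ^ κ) ^ θ *
      (∑ j ∈ G.image Prod.snd, q j ^ κ) ^ (1 - θ) ↔
    ∀ j ∈ G.image Prod.snd, ∀ j' ∈ G.image Prod.snd,
      q j ^ (-κ) * ∑ x ∈ G.filter (fun x => x.2 = j), p x ^ κ =
      q j' ^ (-κ) * ∑ x ∈ G.filter (fun x => x.2 = j'), p x ^ κ := by
  rw [carpetPressure_eq hq, sum_rpow_eq_sum_fiber, mul_assoc, mul_comm (_ ^ θ),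
    mul_right_inj' (rpow_pos_of_pos hm _).ne', sum_rpow_one_sub_mul_rpow_eq_iff hθ₀ hθ₁
    (fun j hj => rpow_pos_of_pos (hq j hj) κ) fun j hj => sum_pos
      (fun x hx => rpow_pos_of_pos (hp x (mem_filter.1 hx).1) κ) (nonempty_filter_snd_eq hj)]
  refine forall₂_congr fun j hj => forall₂_congr fun j' hj' => ?_
  rw [rpow_neg (hq j hj).le, rpow_neg (hq j' hj').le, inv_mul_eq_div, inv_mul_eq_div]

end carpetPressure

theorem stmt8_general (G : Finset (ℕ × ℕ))
    (p : ℕ × ℕ → ℝ) (hp : ∀ x ∈ G, 0 < p x) (hsum : ∑ x ∈ G, p x = 1)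
    (q : ℕ → ℝ) (hq : ∀ j, q j = ∑ x ∈ G.filter (fun x => x.2 = j), p x)
    (m n : ℕ) (hm : 2 ≤ m) (hmn : m < n) (θ : ℝ) (hθ : θ = Real.log m / Real.log n)
    (r t s : ℝ) (hr : 0 < r) (ht : 0 < t) (hs : 0 < s)
    (heqt : (m : ℝ) ^ (-(r * (t / (t + r)))) *
      ∑ j ∈ G.image Prod.snd, q j ^ ((1 - θ) * (t / (t + r))) *
        (∑ x ∈ G.filter (fun x => x.2 = j), p x ^ (t / (t + r))) ^ θ = 1)
    (heqs : (m : ℝ) ^ (-(r * (s / (s + r)))) * (∑ x ∈ G, p x ^ (s / (s + r))) ^ θ *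
      (∑ j ∈ G.image Prod.snd, q j ^ (s / (s + r))) ^ (1 - θ) = 1) :
    t ≤ s ∧
    (t = s ↔ ∀ j ∈ G.image Prod.snd, ∀ j' ∈ G.image Prod.snd,
      q j ^ (-(s / (s + r))) * ∑ x ∈ G.filter (fun x => x.2 = j), p x ^ (s / (s + r)) =
      q j' ^ (-(s / (s + r))) * ∑ x ∈ G.filter (fun x => x.2 = j'), p x ^ (s / (s + r))) := by
  have hm₁ : (1 : ℝ) < m := by exact_mod_cast hm
  obtain ⟨hθ₀, hθ₁⟩ : 0 < θ ∧ θ < 1 := hθ ▸ log_div_log_mem_Ioo hm₁ (by exact_mod_cast hmn)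
  have hG : G.Nonempty := nonempty_of_sum_ne_zero (hsum ▸ one_ne_zero)
  have hp₁ : ∀ x ∈ G, p x ≤ 1 := fun x hx => hsum ▸ single_le_sum (fun y hy => (hp y hy).le) hx
  have hq₀ : ∀ j ∈ G.image Prod.snd, 0 < q j := fun j hj => hq j ▸
    sum_pos (fun x hx => hp x (mem_filter.1 hx).1) (nonempty_filter_snd_eq hj)
  have hq₁ : ∀ j ∈ G.image Prod.snd, q j ≤ 1 := fun j _ => hq j ▸ hsum ▸
    sum_le_sum_of_subset_of_nonneg (filter_subset _ _) fun x hx _ => (hp x hx).le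
  have hF := carpetPressure_strictAnti hm₁ hr hθ₀.le hθ₁.le hp hp₁ hq₀ hq₁ hG
  have hFt : carpetPressure G p q m r θ (t / (t + r)) = 1 := heqt
  have hFs := heqs ▸ carpetPressure_le (r := r) (by positivity) hθ₀.le hθ₁.le hp hq₀ (s / (s + r))
  have hκ := div_add_le_div_add_iff hr (t := t) (s := s) (by linarith) (by linarith)
  have hκ' := div_add_le_div_add_iff hr (t := s) (s := t) (by linarith) (by linarith)
  refine ⟨hκ.1 (hF.le_iff_ge.1 (hFt ▸ hFs)), ?_⟩
  rw [← carpetPressure_eq_iff (r := r) (by linarith : (0 : ℝ) < m) hθ₀ hθ₁ hp hq₀, heqs]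
  constructor
  · rintro rfl
    exact hFt
  · intro h
    have hκeq := hF.injective (h.trans hFt.symm)
    exact le_antisymm (hκ.1 hκeq.ge) (hκ'.1 hκeq.le)

/-- `t_r ≤ s_r`, with equality iff the quantities
`C_{j,r} = q_j^{-s_r/(s_r+r)} ∑_i p_{ij}^{s_r/(s_r+r)}` agree for all `j ∈ G_y`. -/
theorem stmt8 (G : Finset (ℕ × ℕ)) (hG : 2 ≤ G.card)
    (p : ℕ × ℕ → ℝ) (hp : ∀ x ∈ G, 0 < p x) (hsum : ∑ x ∈ G, p x = 1)
    (q : ℕ → ℝ) (hq : ∀ j, q j = ∑ x ∈ G.filter (fun x => x.2 = j), p x)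
    (m n : ℕ) (hm : 2 ≤ m) (hmn : m < n) (θ : ℝ) (hθ : θ = Real.log m / Real.log n)
    (r t s : ℝ) (hr : 0 < r) (ht : 0 < t) (hs : 0 < s)
    (heqt : (m : ℝ) ^ (-(r * (t / (t + r)))) *
      ∑ j ∈ G.image Prod.snd, q j ^ ((1 - θ) * (t / (t + r))) *
        (∑ x ∈ G.filter (fun x => x.2 = j), p x ^ (t / (t + r))) ^ θ = 1)
    (heqs : (m : ℝ) ^ (-(r * (s / (s + r)))) * (∑ x ∈ G, p x ^ (s / (s + r))) ^ θ *
      (∑ j ∈ G.image Prod.snd, q j ^ (s / (s + r))) ^ (1 - θ) = 1) :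
    t ≤ s ∧
    (t = s ↔ ∀ j ∈ G.image Prod.snd, ∀ j' ∈ G.image Prod.snd,
      q j ^ (-(s / (s + r))) * ∑ x ∈ G.filter (fun x => x.2 = j), p x ^ (s / (s + r)) =
      q j' ^ (-(s / (s + r))) * ∑ x ∈ G.filter (fun x => x.2 = j'), p x ^ (s / (s + r))) :=
  stmt8_general G p hp hsum q hq m n hm hmn θ hθ r t s hr ht hs heqt heqs
end

section
/- Let ν be a Borel probability measure on ℝ² and suppose there exist C > 0 and t > 0 such that ν(B_ε(x)) ≤ C ε^t for all x ∈ ℝ² and ε > 0. Then there exists a constant c (depending on C, t) such that for every k ∈ ℕ and every finite set α ⊂ ℝ² with card(α) ≤ k, one has exp(∫ log d(x, α) dν(x)) ≥ e^{−(log k + c)/t}; in particular the k-th geometric mean quantization error ê_k(ν) = inf_α ∫ log d(x,α) dν satisfies ê_k(ν) ≥ −(log k + c)/t. -/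
/-!
The set `{x | d(x, α) < ε}` is covered by the `k` balls of radius `ε` around the points of `α`, so
the Frostman bound gives `ν {x | -log d(x, α) > s} ≤ A e^{-ts}` with `A = k · max C 1 ≥ 1`. By the
layer-cake formula the negative part of `log d(x, α)` has integral at most
`∫₀^∞ min (1, A e^{-ts}) ds = (log A + 1) / t`, and the integral of `log d(x, α)` is at least minus
that (also when it is the junk value `0` of a non-integrable function).
-/

open MeasureTheory Set Real

theorem measure_infDist_lt_le {X : Type*} [PseudoMetricSpace X] [MeasurableSpace X]
    (ν : Measure X) {α : Finset X} (hα : α.Nonempty) {ε : ℝ} {m : ENNReal}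
    (hball : ∀ a ∈ α, ν (Metric.closedBall a ε) ≤ m) :
    ν {x | Metric.infDist x (α : Set X) < ε} ≤ α.card * m := by
  have hcover : {x | Metric.infDist x (α : Set X) < ε} ⊆ ⋃ a ∈ α, Metric.closedBall a ε := by
    intro x hx
    obtain ⟨a, ha, hxa⟩ := (Metric.infDist_lt_iff (by exact_mod_cast hα)).mp hx
    exact mem_biUnion ha hxa.le
  calc ν {x | Metric.infDist x (α : Set X) < ε}
      ≤ ∑ a ∈ α, ν (Metric.closedBall a ε) :=
        (measure_mono hcover).trans (measure_biUnion_finset_le _ _)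
    _ ≤ ∑ _a ∈ α, m := Finset.sum_le_sum hball
    _ = α.card * m := by rw [Finset.sum_const, nsmul_eq_mul]

theorem lintegral_ofReal_le_of_meas_lt_le_exp {X : Type*} [MeasurableSpace X] {μ : Measure X}
    [IsProbabilityMeasure μ] {g : X → ℝ} (hg : AEMeasurable g μ) {A t : ℝ} (hA : 1 ≤ A)
    (ht : 0 < t) (htail : ∀ s > 0, μ {x | s < g x} ≤ ENNReal.ofReal (A * exp (-t * s))) :
    ∫⁻ x, ENNReal.ofReal (g x) ∂μ ≤ ENNReal.ofReal ((log A + 1) / t) := by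
  have layercake : ∫⁻ x, ENNReal.ofReal (g x) ∂μ = ∫⁻ s in Ioi 0, μ {x | s < g x} := by
    have h := lintegral_eq_lintegral_meas_lt μ (f := fun x => max (g x) 0)
      (Filter.Eventually.of_forall fun x => le_max_right _ _) (hg.max aemeasurable_const)
    simp only [ENNReal.ofReal_max, ENNReal.ofReal_zero, zero_le, max_eq_left] at h
    rw [h]
    refine setLIntegral_congr_fun measurableSet_Ioi fun s hs => ?_
    simp only [lt_max_iff, not_lt_of_gt (mem_Ioi.mp hs), or_false]
  set s₀ := log A / t
  have hs₀ : 0 ≤ s₀ := div_nonneg (log_nonneg hA) ht.le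
  have hts₀ : t * s₀ = log A := mul_div_cancel₀ _ ht.ne'
  have head : ∫⁻ s in Ioc 0 s₀, μ {x | s < g x} ≤ ENNReal.ofReal s₀ := by
    calc ∫⁻ s in Ioc 0 s₀, μ {x | s < g x} ≤ ∫⁻ _ in Ioc 0 s₀, 1 :=
          lintegral_mono fun _ => prob_le_one
      _ = ENNReal.ofReal s₀ := by simp
  have tail : ∫⁻ s in Ioi s₀, μ {x | s < g x} ≤ ENNReal.ofReal (1 / t) := by
    have hint : IntegrableOn (fun s => A * exp (-t * s)) (Ioi s₀) :=
      (integrableOn_exp_mul_Ioi (neg_neg_of_pos ht) s₀).const_mul A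
    calc ∫⁻ s in Ioi s₀, μ {x | s < g x}
        ≤ ∫⁻ s in Ioi s₀, ENNReal.ofReal (A * exp (-t * s)) :=
          setLIntegral_mono' measurableSet_Ioi fun s hs => htail s (hs₀.trans_lt hs)
      _ = ENNReal.ofReal (∫ s in Ioi s₀, A * exp (-t * s)) :=
          (ofReal_integral_eq_lintegral_ofReal hint
            (Filter.Eventually.of_forall fun s => by positivity)).symm
      _ = ENNReal.ofReal (1 / t) := by
          rw [integral_const_mul, integral_exp_mul_Ioi (neg_neg_of_pos ht),
            neg_mul, hts₀, exp_neg, exp_log (by linarith)]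
          field_simp
  calc ∫⁻ x, ENNReal.ofReal (g x) ∂μ
      ≤ ∫⁻ s in Ioc 0 s₀ ∪ Ioi s₀, μ {x | s < g x} := by
        rw [layercake]
        exact lintegral_mono_set fun s hs => by
          rcases le_or_gt s s₀ with h | h
          exacts [Or.inl ⟨hs, h⟩, Or.inr h]
    _ ≤ ENNReal.ofReal s₀ + ENNReal.ofReal (1 / t) :=
        (lintegral_union_le _ _ _).trans (add_le_add head tail)
    _ = ENNReal.ofReal ((log A + 1) / t) := by
        rw [← ENNReal.ofReal_add hs₀ (by positivity), ← hts₀]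
        field_simp

theorem neg_toReal_lintegral_ofReal_neg_le_integral {X : Type*} [MeasurableSpace X]
    (μ : Measure X) (f : X → ℝ) : -(∫⁻ x, ENNReal.ofReal (-f x) ∂μ).toReal ≤ ∫ x, f x ∂μ := by
  by_cases hf : Integrable f μ
  · rw [integral_eq_lintegral_pos_part_sub_lintegral_neg_part hf]
    linarith [ENNReal.toReal_nonneg (a := ∫⁻ x, ENNReal.ofReal (f x) ∂μ)]
  · rw [integral_undef hf, neg_nonpos]
    exact ENNReal.toReal_nonneg

theorem le_integral_log_infDist_of_frostman {X : Type*} [PseudoMetricSpace X] [MeasurableSpace X]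
    [OpensMeasurableSpace X] (ν : Measure X) [IsProbabilityMeasure ν] {C t : ℝ} (ht : 0 < t)
    (hfrost : ∀ (x : X) (ε : ℝ), 0 < ε → ν (Metric.closedBall x ε) ≤ ENNReal.ofReal (C * ε ^ t))
    {α : Finset X} (hα : α.Nonempty) :
    -(log α.card + (log (max C 1) + 1)) / t ≤ ∫ x, log (Metric.infDist x (α : Set X)) ∂ν := by
  set d := fun x => Metric.infDist x (α : Set X)
  set A := α.card * max C 1
  have hcard : (1 : ℝ) ≤ α.card := by exact_mod_cast hα.card_pos
  have hA : 1 ≤ A := one_le_mul_of_one_le_of_one_le hcard (le_max_right _ _)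
  have htail : ∀ s > 0, ν {x | s < -log (d x)} ≤ ENNReal.ofReal (A * exp (-t * s)) := by
    intro s hs
    have hsub : {x | s < -log (d x)} ⊆ {x | d x < exp (-s)} := fun x hx => by
      rcases (show 0 ≤ d x from Metric.infDist_nonneg).eq_or_lt with h | h
      · show d x < exp (-s)
        rw [← h]
        exact exp_pos _
      · exact (log_lt_iff_lt_exp h).mp (by linarith [show s < -log (d x) from hx])
    calc ν {x | s < -log (d x)} ≤ ν {x | d x < exp (-s)} := measure_mono hsub
      _ ≤ α.card * ENNReal.ofReal (C * exp (-s) ^ t) :=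
          measure_infDist_lt_le ν hα fun a _ => hfrost a _ (exp_pos _)
      _ ≤ ENNReal.ofReal (A * exp (-t * s)) := by
          rw [← exp_mul, ← ENNReal.ofReal_natCast, ← ENNReal.ofReal_mul (by positivity)]
          refine ENNReal.ofReal_le_ofReal ?_
          rw [mul_assoc, show -s * t = -t * s by ring]
          gcongr
          exact le_max_left _ _
  have hmeas : AEMeasurable (fun x => -log (d x)) ν :=
    (measurable_log.comp (Metric.continuous_infDist_pt _).measurable).neg.aemeasurable
  have hneg := ENNReal.toReal_le_of_le_ofReal
    (div_nonneg (by linarith [log_nonneg hA]) ht.le)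
    (lintegral_ofReal_le_of_meas_lt_le_exp hmeas hA ht htail)
  calc -(log α.card + (log (max C 1) + 1)) / t
      = -((log A + 1) / t) := by
        rw [log_mul (zero_lt_one.trans_le hcard).ne' (zero_lt_one.trans_le (le_max_right C 1)).ne']
        ring
    _ ≤ -(∫⁻ x, ENNReal.ofReal (-log (d x)) ∂ν).toReal := neg_le_neg hneg
    _ ≤ ∫ x, log (d x) ∂ν := neg_toReal_lintegral_ofReal_neg_le_integral ν _

theorem stmt18_general (ν : Measure (EuclideanSpace ℝ (Fin 2))) [IsProbabilityMeasure ν]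
    (C t : ℝ) (ht : 0 < t)
    (hfrost : ∀ (x : EuclideanSpace ℝ (Fin 2)) (ε : ℝ), 0 < ε →
      ν (Metric.closedBall x ε) ≤ ENNReal.ofReal (C * ε ^ t)) :
    ∃ c : ℝ, ∀ k : ℕ, 1 ≤ k → ∀ α : Finset (EuclideanSpace ℝ (Fin 2)),
      α.Nonempty → α.card ≤ k →
      (-(Real.log k + c) / t ≤ ∫ x, Real.log (Metric.infDist x (α : Set _)) ∂ν ∧
        Real.exp (-(Real.log k + c) / t) ≤
          Real.exp (∫ x, Real.log (Metric.infDist x (α : Set _)) ∂ν)) := by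
  refine ⟨log (max C 1) + 1, fun k _ α hα hcard => ?_⟩
  have hlog : log α.card ≤ log k :=
    log_le_log (by exact_mod_cast hα.card_pos) (by exact_mod_cast hcard)
  have hbound : -(log k + (log (max C 1) + 1)) / t ≤ -(log α.card + (log (max C 1) + 1)) / t := by
    gcongr
  have hmain := hbound.trans (le_integral_log_infDist_of_frostman ν ht hfrost hα)
  exact ⟨hmain, exp_le_exp.mpr hmain⟩

/-- A uniform Frostman bound `ν(B_ε(x)) ≤ C ε^t` yields a lower bound
`ê_k(ν) ≥ -(log k + c)/t` for the geometric mean quantization errors. -/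
theorem stmt18 (ν : Measure (EuclideanSpace ℝ (Fin 2))) [IsProbabilityMeasure ν]
    (C t : ℝ) (hC : 0 < C) (ht : 0 < t)
    (hfrost : ∀ (x : EuclideanSpace ℝ (Fin 2)) (ε : ℝ), 0 < ε →
      ν (Metric.closedBall x ε) ≤ ENNReal.ofReal (C * ε ^ t)) :
    ∃ c : ℝ, ∀ k : ℕ, 1 ≤ k → ∀ α : Finset (EuclideanSpace ℝ (Fin 2)),
      α.Nonempty → α.card ≤ k →
      (-(Real.log k + c) / t ≤ ∫ x, Real.log (Metric.infDist x (α : Set _)) ∂ν ∧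
        Real.exp (-(Real.log k + c) / t) ≤
          Real.exp (∫ x, Real.log (Metric.infDist x (α : Set _)) ∂ν)) :=
  stmt18_general ν C t ht hfrost
end
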